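/- Let m be even, m ≥ 2, and let y ∈ Ỹ_m with y_0 = 0, y_1 = 1. Suppose 𝔉'(y) (the set of odd-cardinality intervals of 𝔉(y)) contains at least one interval different from the interval [0,α] containing 0. Then for any (x, x') ∈ S̃(y) one has |𝔖(x')| ≥ 3. -/

import Mathlib

open Finset

/-- `X_m`: sequences `(x_0,…,x_m)` in `ℕ` with `x i ≤ x (i+1)` and `x i < x (i+2)`. -/
def IsX (m : ℕ) (x : ℕ → ℕ) : Prop :=
  (∀ i, i < m → x i ≤ x (i + 1)) ∧ (∀ i, i + 2 ≤ m → x i < x (i + 2))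

/-- `Y_m`: sequences with `y i ≤ y (i+1)` and `y i + 2 ≤ y (i+2)`. -/
def IsY (m : ℕ) (y : ℕ → ℕ) : Prop :=
  (∀ i, i < m → y i ≤ y (i + 1)) ∧ (∀ i, i + 2 ≤ m → y i + 2 ≤ y (i + 2))

/-- `ℰ_m`: weakly increasing sequences. -/
def IsE (m : ℕ) (e : ℕ → ℕ) : Prop := ∀ i, i < m → e i ≤ e (i + 1)

/-- `𝔖(x)`: indices `i ∈ [0,m]` with `x (i-1) < x i < x (i+1)`,
with conventions `x_{-1} = -∞`, `x_{m+1} = +∞`. -/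
def SS (m : ℕ) (x : ℕ → ℕ) : Finset ℕ :=
  (Finset.range (m + 1)).filter
    (fun i => (i = 0 ∨ x (i - 1) < x i) ∧ (i = m ∨ x i < x (i + 1)))

/-- `𝔉(y)`: intervals `[i,j] ⊆ [0,m]` with
`y_{i-1}-(i-1) < y_i-i = ⋯ = y_j-j < y_{j+1}-(j+1)` (conventions `±∞` at the ends),
encoded as pairs `(i, j)`. -/
def FF (m : ℕ) (y : ℕ → ℕ) : Finset (ℕ × ℕ) :=
  ((Finset.range (m + 1)) ×ˢ (Finset.range (m + 1))).filter
    (fun p => p.1 ≤ p.2 ∧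
      (p.1 = 0 ∨ ((y (p.1 - 1) : ℤ) - ((p.1 : ℤ) - 1) < (y p.1 : ℤ) - (p.1 : ℤ))) ∧
      (p.2 = m ∨ ((y p.2 : ℤ) - (p.2 : ℤ) < (y (p.2 + 1) : ℤ) - ((p.2 : ℤ) + 1))) ∧
      (∀ k ∈ Finset.Ico p.1 p.2, ((y k : ℤ) - (k : ℤ) = (y (k + 1) : ℤ) - ((k : ℤ) + 1))))

/-- `𝔉'(y)`: the intervals in `𝔉(y)` of odd cardinality. -/
def FF' (m : ℕ) (y : ℕ → ℕ) : Finset (ℕ × ℕ) :=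
  (FF m y).filter (fun p => Odd (p.2 - p.1 + 1))

/-- `R(y)`: endpoints of intervals in `𝔉(y)`. -/
def RR (m : ℕ) (y : ℕ → ℕ) : Finset ℕ :=
  (Finset.range (m + 1)).filter (fun k => ∃ p ∈ FF m y, k = p.1 ∨ k = p.2)

/-- `R_0(y)`: those `k` with `[k,k] ∈ 𝔉(y)`. -/
def RR0 (m : ℕ) (y : ℕ → ℕ) : Finset ℕ :=
  (Finset.range (m + 1)).filter (fun k => (k, k) ∈ FF m y)

/-- `S(y)`: pairs `(x, x') ∈ X_m × X_m` with `x + x' = y`,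
`𝔖(x) ∪ 𝔖(x') = R(y)`, `𝔖(x) ∩ 𝔖(x') = R_0(y)`, and `𝔖(x') = ∅` if `𝔉'(y) = ∅`. -/
def IsS (m : ℕ) (y x x' : ℕ → ℕ) : Prop :=
  IsX m x ∧ IsX m x' ∧ (∀ i, i ≤ m → x i + x' i = y i) ∧
  SS m x ∪ SS m x' = RR m y ∧ SS m x ∩ SS m x' = RR0 m y ∧
  (FF' m y = ∅ → SS m x' = ∅)

/-- `X̃_m`: elements of `X_m` with `x 0 = 0`, `x 1 ≥ 1`. -/
def IsXt (m : ℕ) (x : ℕ → ℕ) : Prop := IsX m x ∧ x 0 = 0 ∧ 1 ≤ x 1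

/-- `S̃(y)`: pairs `(x, x') ∈ X_m × X̃_m` with `x + x' = y`,
`𝔖(x) ∪ 𝔖(x') = R(y)`, `𝔖(x) ∩ 𝔖(x') = R_0(y)`, and `𝔖(x') = {0}` in case
every odd-cardinality interval of `𝔉(y)` has left endpoint `0`. -/
def IsSt (m : ℕ) (y x x' : ℕ → ℕ) : Prop :=
  IsX m x ∧ IsXt m x' ∧ (∀ i, i ≤ m → x i + x' i = y i) ∧
  SS m x ∪ SS m x' = RR m y ∧ SS m x ∩ SS m x' = RR0 m y ∧
  ((∀ p ∈ FF' m y, p.1 = 0) → SS m x' = {0})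

/-!
For `x ∈ X_m` the indices outside `𝔖(x)` come in adjacent pairs `i, i + 1` with `x i = x (i + 1)`,
so `|𝔖(x)| ≡ m + 1 (mod 2)`: for even `m` the set `𝔖(x')` has odd size. It contains `0`, and it also
contains an endpoint of every odd interval `[i, j] ∈ 𝔉(y)`. Indeed, if both endpoints lay in `𝔖(x)`
only, then on `[i, j]` the sum `x + x' = y` grows by exactly one per step, so the steps of `x` and
`x'` alternate; starting with a step of `x` at `i`, after an even number `j - i` of steps the last
one would again belong to `x'`, contradicting `j ∈ 𝔖(x)`. An interval with `i ≠ 0` thus supplies a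
second element of `𝔖(x')`, and parity gives a third.
-/

lemma mem_SS_iff {m : ℕ} {x : ℕ → ℕ} {i : ℕ} :
    i ∈ SS m x ↔ i ≤ m ∧ (i = 0 ∨ x (i - 1) < x i) ∧ (i = m ∨ x i < x (i + 1)) := by
  simp [SS]

def plateaus (m : ℕ) (x : ℕ → ℕ) : Finset ℕ :=
  (range m).filter (fun i => x i = x (i + 1))

lemma mem_plateaus {m : ℕ} {x : ℕ → ℕ} {i : ℕ} :
    i ∈ plateaus m x ↔ i < m ∧ x i = x (i + 1) := by
  simp [plateaus]

lemma disjoint_plateaus_image_succ {m : ℕ} {x : ℕ → ℕ} (hx : IsX m x) :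
    Disjoint (plateaus m x) ((plateaus m x).image (· + 1)) := by
  simp only [disjoint_left, mem_image, mem_plateaus]
  rintro i ⟨hi, hi'⟩ ⟨j, ⟨-, hj⟩, rfl⟩
  have : x j < x (j + 1 + 1) := hx.2 j (by omega)
  omega

lemma range_sdiff_SS {m : ℕ} {x : ℕ → ℕ} (hx : IsX m x) :
    range (m + 1) \ SS m x = plateaus m x ∪ (plateaus m x).image (· + 1) := by
  ext i
  simp only [mem_sdiff, mem_range, mem_SS_iff, mem_union, mem_image, mem_plateaus]
  constructor
  · rintro ⟨him, hi⟩
    by_cases hleft : i = 0 ∨ x (i - 1) < x i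
    · have := hx.1 i
      left; omega
    · have := hx.1 (i - 1)
      right; exact ⟨i - 1, by grind⟩
  · rintro (⟨him, hi⟩ | ⟨j, ⟨hjm, hj⟩, rfl⟩)
    · omega
    · simp only [Nat.add_sub_cancel]; omega

lemma card_SS_add_two_mul_card_plateaus {m : ℕ} {x : ℕ → ℕ} (hx : IsX m x) :
    (SS m x).card + 2 * (plateaus m x).card = m + 1 := by
  have hSS : SS m x ⊆ range (m + 1) := filter_subset _ _
  rw [← card_range (m + 1), ← card_sdiff_add_card_eq_card hSS, range_sdiff_SS hx,
    card_union_of_disjoint (disjoint_plateaus_image_succ hx),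
    card_image_of_injective _ (add_left_injective 1)]
  ring

lemma odd_card_SS {m : ℕ} (hm : Even m) {x : ℕ → ℕ} (hx : IsX m x) : Odd (SS m x).card := by
  have := card_SS_add_two_mul_card_plateaus hx
  obtain ⟨r, rfl⟩ := hm
  exact ⟨r - (plateaus (r + r) x).card, by omega⟩

lemma zero_mem_SS {m : ℕ} {x : ℕ → ℕ} (hx : IsXt m x) : 0 ∈ SS m x :=
  mem_SS_iff.2 ⟨Nat.zero_le m, Or.inl rfl, Or.inr (by rw [hx.2.1]; exact hx.2.2)⟩

section Alternation

variable {m : ℕ} {y x x' : ℕ → ℕ}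

lemma lt_succ_iff_eq_succ_of_unit_steps (hx : IsX m x) (hx' : IsX m x')
    (hsum : ∀ i, i ≤ m → x i + x' i = y i) {k : ℕ} (hk : k + 2 ≤ m)
    (hy₁ : y (k + 1) = y k + 1) (hy₂ : y (k + 2) = y (k + 1) + 1) :
    x k < x (k + 1) ↔ x (k + 1) = x (k + 2) := by
  have := hsum k (by omega); have := hsum (k + 1) (by omega); have := hsum (k + 2) hk
  have := hx.1 k (by omega); have := hx.1 (k + 1) (by omega); have := hx.2 k hk
  have := hx'.1 k (by omega); have := hx'.1 (k + 1) (by omega); have := hx'.2 k hk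
  omega

lemma lt_succ_iff_even_of_unit_steps (hx : IsX m x) (hx' : IsX m x')
    (hsum : ∀ i, i ≤ m → x i + x' i = y i) {a b : ℕ} (hb : b ≤ m)
    (hy : ∀ k, a ≤ k → k < b → y (k + 1) = y k + 1) (ha : x a < x (a + 1)) :
    ∀ j, a + j < b → (x (a + j) < x (a + j + 1) ↔ Even j) := by
  intro j
  induction j with
  | zero => intro _; simpa using ha
  | succ j ih =>
    intro hj
    have hflip := lt_succ_iff_eq_succ_of_unit_steps hx hx' hsum (k := a + j) (by omega)
      (hy (a + j) (by omega) (by omega)) (hy (a + j + 1) (by omega) (by omega))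
    have hmono : x (a + j + 1) ≤ x (a + j + 2) := hx.1 (a + j + 1) (by omega)
    rw [Nat.even_add_one, ← ih (by omega), hflip, ← add_assoc]
    exact hmono.lt_iff_ne

end Alternation

section Intervals

variable {m : ℕ} {y : ℕ → ℕ} {p : ℕ × ℕ}

lemma fst_le_snd_of_mem_FF (hp : p ∈ FF m y) : p.1 ≤ p.2 := (mem_filter.1 hp).2.1

lemma snd_le_of_mem_FF (hp : p ∈ FF m y) : p.2 ≤ m := by
  have := (mem_product.1 (mem_filter.1 hp).1).2
  simp only [mem_range] at this
  omega

lemma succ_eq_of_mem_FF (hp : p ∈ FF m y) {k : ℕ} (hk₁ : p.1 ≤ k) (hk₂ : k < p.2) :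
    y (k + 1) = y k + 1 := by
  have := (mem_filter.1 hp).2.2.2.2 k (mem_Ico.2 ⟨hk₁, hk₂⟩)
  omega

lemma fst_mem_RR_of_mem_FF (hp : p ∈ FF m y) : p.1 ∈ RR m y :=
  have := fst_le_snd_of_mem_FF hp
  have := snd_le_of_mem_FF hp
  mem_filter.2 ⟨mem_range.2 (by omega), p, hp, Or.inl rfl⟩

lemma snd_mem_RR_of_mem_FF (hp : p ∈ FF m y) : p.2 ∈ RR m y :=
  mem_filter.2 ⟨mem_range.2 (by have := snd_le_of_mem_FF hp; omega), p, hp, Or.inr rfl⟩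

lemma mem_RR0_of_mem_FF {i : ℕ} (hp : (i, i) ∈ FF m y) : i ∈ RR0 m y :=
  mem_filter.2 ⟨mem_range.2 (by have := snd_le_of_mem_FF hp; omega), hp⟩

end Intervals

lemma fst_mem_SS_or_snd_mem_SS_of_mem_FF' {m : ℕ} {y x x' : ℕ → ℕ} (hx : IsX m x)
    (hx' : IsX m x') (hsum : ∀ i, i ≤ m → x i + x' i = y i)
    (hunion : SS m x ∪ SS m x' = RR m y) (hinter : SS m x ∩ SS m x' = RR0 m y)
    {i j : ℕ} (hp : (i, j) ∈ FF' m y) : i ∈ SS m x' ∨ j ∈ SS m x' := by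
  obtain ⟨hpF, hodd⟩ := mem_filter.1 hp
  by_contra! hnot
  have mem_SS_left : ∀ k ∈ RR m y, k ∉ SS m x' → k ∈ SS m x := fun k hk hk' => by
    rw [← hunion, mem_union] at hk
    exact hk.resolve_right hk'
  have hfst := mem_SS_iff.1 (mem_SS_left i (fst_mem_RR_of_mem_FF hpF) hnot.1)
  have hsnd := mem_SS_iff.1 (mem_SS_left j (snd_mem_RR_of_mem_FF hpF) hnot.2)
  have hjm : j ≤ m := snd_le_of_mem_FF hpF
  have hij : i ≤ j := fst_le_snd_of_mem_FF hpF
  obtain rfl | hij := hij.eq_or_lt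
  · have := mem_RR0_of_mem_FF hpF
    rw [← hinter] at this
    exact hnot.1 (mem_inter.1 this).2
  · have hstart : x i < x (i + 1) := hfst.2.2.resolve_left (by omega)
    have hend : x (j - 1) < x j := hsnd.2.1.resolve_left (by omega)
    have halt := lt_succ_iff_even_of_unit_steps hx hx' hsum hjm
      (fun k => succ_eq_of_mem_FF hpF) hstart (j - 1 - i) (by omega)
    rw [show i + (j - 1 - i) = j - 1 by omega, Nat.sub_add_cancel (by omega)] at halt
    obtain ⟨r, hr⟩ := halt.1 hend
    obtain ⟨s, hs⟩ := hodd
    dsimp only at hs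
    omega

theorem stmt15_general (m : ℕ) (hm : Even m) (y : ℕ → ℕ)
    (hF : ∃ p ∈ FF' m y, p.1 ≠ 0)
    (x x' : ℕ → ℕ) (h : IsSt m y x x') : 3 ≤ (SS m x').card := by
  obtain ⟨hx, hx', hsum, hunion, hinter, -⟩ := h
  obtain ⟨⟨i, j⟩, hp, hi⟩ := hF
  have hij := fst_le_snd_of_mem_FF (mem_filter.1 hp).1
  obtain ⟨k, hk, hk0⟩ : ∃ k ∈ SS m x', k ≠ 0 := by
    rcases fst_mem_SS_or_snd_mem_SS_of_mem_FF' hx hx'.1 hsum hunion hinter hp with h | h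
    exacts [⟨i, h, hi⟩, ⟨j, h, by dsimp only at hi hij; omega⟩]
  have htwo : 1 < (SS m x').card := one_lt_card.2 ⟨0, zero_mem_SS hx', k, hk, hk0.symm⟩
  obtain ⟨r, hr⟩ := odd_card_SS hm hx'.1
  omega

theorem stmt15 (m : ℕ) (hm : Even m) (h2 : 2 ≤ m) (y : ℕ → ℕ) (hy : IsY m y)
    (h0 : y 0 = 0) (h1 : y 1 = 1) (hF : ∃ p ∈ FF' m y, p.1 ≠ 0)
    (x x' : ℕ → ℕ) (h : IsSt m y x x') : 3 ≤ (SS m x').card :=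
  stmt15_general m hm y hF x x' h
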